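/- arXiv:1311.2563 — 2 statements merged into one kernel-verified Lean document; each statement's English description precedes it below -/
import Mathlib

section
/- Let G be a finite simple graph, k a nonnegative integer, and S ⊆ V(G) a set that is (2k,k)-unbreakable in G. Let c : V(G) → {black, white} be a 2-colouring of the vertices such that at most k edges of G have endpoints of different colours. Then min(|c⁻¹(black) ∩ S|, |c⁻¹(white) ∩ S|) ≤ 3k. -/
/-!
Let `C` be the white vertices and `N = N(C)` the black vertices with a white neighbour. Each
vertex of `N` is an endpoint of its own bichromatic edge, so `|N| ≤ k`, and
`(Cᶜ, C ∪ N)` is a separation of order `|N|`. Unbreakability bounds the white part of `S`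
by `2k` or the black part outside `N` by `2k`; adding back `N` costs at most `k` more.
-/

open SimpleGraph

variable {V : Type*}

/-- The open neighbourhood `N_G(C)` of a vertex set `C`:
vertices outside `C` with a neighbour in `C`. -/
def setNbhd (G : SimpleGraph V) (C : Set V) : Set V :=
  {v | v ∉ C ∧ ∃ u ∈ C, G.Adj u v}

/-- The closed neighbourhood `N_G[C] = C ∪ N_G(C)`. -/
def closedNbhd (G : SimpleGraph V) (C : Set V) : Set V :=
  C ∪ setNbhd G C

/-- `W` is `(q,k)`-unbreakable in the induced subgraph `G[U]`:
every separation `(A,B)` of `G[U]` of order at most `k` has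
`|(A∖B) ∩ W| ≤ q` or `|(B∖A) ∩ W| ≤ q`. -/
def UnbreakableIn (G : SimpleGraph V) (U W : Set V) (q k : ℕ) : Prop :=
  ∀ A B : Set V, A ∪ B = U →
    (∀ a ∈ A \ B, ∀ b ∈ B \ A, ¬ G.Adj a b) →
    (A ∩ B).ncard ≤ k →
    ((A \ B) ∩ W).ncard ≤ q ∨ ((B \ A) ∩ W).ncard ≤ q

/-- `W` is `(q,k)`-unbreakable in `G`. -/
def Unbreakable (G : SimpleGraph V) (W : Set V) (q k : ℕ) : Prop :=
  UnbreakableIn G Set.univ W q k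

/-- `x` and `y` lie in the same connected component of `G − W`. -/
def ReachAvoid (G : SimpleGraph V) (W : Set V) (x y : V) : Prop :=
  ∃ (hx : x ∈ Wᶜ) (hy : y ∈ Wᶜ), (G.induce Wᶜ).Reachable ⟨x, hx⟩ ⟨y, hy⟩

/-- `W` is an `X–Y` separator: no connected component of `G − W` contains
a vertex of `X∖W` and a vertex of `Y∖W`. -/
def IsSeparator (G : SimpleGraph V) (X Y W : Set V) : Prop :=
  ∀ x ∈ X \ W, ∀ y ∈ Y \ W, ¬ ReachAvoid G W x y

/-- `R_{G−W}(X∖W)`: the set of vertices reachable from `X∖W` in `G − W`. -/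
def reachSet (G : SimpleGraph V) (W X : Set V) : Set V :=
  {y | ∃ x ∈ X \ W, ReachAvoid G W x y}

/-- `W` is an important `X–Y` separator. -/
def IsImportantSeparator (G : SimpleGraph V) (X Y W : Set V) : Prop :=
  IsSeparator G X Y W ∧
  (∀ W' ⊆ W, IsSeparator G X Y W' → W' = W) ∧
  ∀ W' : Set V, IsSeparator G X Y W' → W'.ncard ≤ W.ncard →
    ¬ reachSet G W X ⊂ reachSet G W' X

/-- A chip (w.r.t. `G`, `k` and `S`): `G[C]` is connected, `|N_G(C)| ≤ 3k`,
and `N_G(C)` is an important `C–S` separator. -/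
def IsChip (G : SimpleGraph V) (k : ℕ) (S C : Set V) : Prop :=
  (G.induce C).Connected ∧ (setNbhd G C).ncard ≤ 3 * k ∧
  IsImportantSeparator G C S (setNbhd G C)

/-- The family of all inclusion-wise maximal chips. -/
def maximalChips (G : SimpleGraph V) (k : ℕ) (S : Set V) : Set (Set V) :=
  {C | IsChip G k S C ∧ ∀ C', IsChip G k S C' → C ⊆ C' → C' = C}

/-- Two vertex sets touch: they intersect or some edge joins them. -/
def Touches (G : SimpleGraph V) (C₁ C₂ : Set V) : Prop :=
  (C₁ ∩ C₂).Nonempty ∨ ∃ u ∈ C₁, ∃ v ∈ C₂, G.Adj u v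

/-- `D` is a connected component of `G − A`: a maximal set disjoint from `A`
inducing a connected subgraph. -/
def IsCompOf (G : SimpleGraph V) (A D : Set V) : Prop :=
  D ⊆ Aᶜ ∧ (G.induce D).Connected ∧
  ∀ D', D ⊆ D' → D' ⊆ Aᶜ → (G.induce D').Connected → D' = D

/-- The set `A = (⋂_{C ∈ 𝒞} V(G) ∖ N[C]) ∪ ⋃_{C ∈ 𝒞} N(C)` built from the
maximal chips (equals `V(G)` when there are no chips). -/
def chipBag (G : SimpleGraph V) (k : ℕ) (S : Set V) : Set V :=
  (⋂ C ∈ maximalChips G k S, (closedNbhd G C)ᶜ) ∪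
    ⋃ C ∈ maximalChips G k S, setNbhd G C

/-- `η(k) = 3k·(3k·4^{3k}+1)`. -/
def etaB (k : ℕ) : ℕ := 3 * k * (3 * k * 4 ^ (3 * k) + 1)

/-- `τ(k) = (3k)²·8^{3k} + 2k`. -/
def tauB (k : ℕ) : ℕ := (3 * k) ^ 2 * 8 ^ (3 * k) + 2 * k

/-- `τ′(k) = τ + (C(τ+k,2)·k + k)·k·η`. -/
def tauB' (k : ℕ) : ℕ :=
  tauB k + ((tauB k + k).choose 2 * k + k) * k * etaB k

/-- The tree graph determined by a parent function. -/
def parentGraph {T : Type*} (parent : T → T) : SimpleGraph T where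
  Adj t s := t ≠ s ∧ (parent t = s ∨ parent s = t)
  symm := by constructor; intro t s h; exact ⟨h.1.symm, h.2.symm⟩
  loopless := by constructor; intro t h; exact h.1 rfl

/-- The descendants of `t` (including `t` itself). -/
def descSet {T : Type*} (parent : T → T) (t : T) : Set T :=
  {u | ∃ n : ℕ, parent^[n] u = t}

/-- `γ(t) = ⋃_{u ⪯ t} β(u)`. -/
def gammaSet {T : Type*} (parent : T → T) (β : T → Set V) (t : T) : Set V :=
  ⋃ u ∈ descSet parent t, β u

/-- `σ(t) = ∅` for the root, `β(t) ∩ β(parent t)` otherwise. -/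
def sigmaSet {T : Type*} [DecidableEq T] (root : T) (parent : T → T)
    (β : T → Set V) (t : T) : Set V :=
  if t = root then ∅ else β t ∩ β (parent t)

/-- `(T,β)` (a rooted tree given by `root` and `parent`, with bags `β`)
is a tree decomposition of `G`. -/
structure IsTreeDecomp (G : SimpleGraph V) {T : Type*} (root : T) (parent : T → T)
    (β : T → Set V) : Prop where
  parent_root : parent root = root
  reaches_root : ∀ t : T, ∃ n : ℕ, parent^[n] t = root
  bags_connected : ∀ v : V, ((parentGraph parent).induce {t | v ∈ β t}).Connected
  edge_in_bag : ∀ u v : V, G.Adj u v → ∃ t : T, u ∈ β t ∧ v ∈ β t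

def cutEdges (G : SimpleGraph V) (C : Set V) : Set (Sym2 V) :=
  {e | ∃ u ∈ C, ∃ v ∉ C, G.Adj u v ∧ e = s(u, v)}

/-- Each vertex of `N(C)` is matched to an edge joining it to one of its neighbours in `C`. -/
theorem ncard_setNbhd_le_ncard_cutEdges [Finite V] (G : SimpleGraph V) (C : Set V) :
    (setNbhd G C).ncard ≤ (cutEdges G C).ncard := by
  have hnbr : ∀ v ∈ setNbhd G C, ∃ u ∈ C, G.Adj u v := fun v hv => hv.2
  choose! f hfC hfadj using hnbr
  refine Set.ncard_le_ncard_of_injOn (fun v => s(f v, v)) ?_ ?_ (Set.toFinite _)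
  · intro v hv
    exact ⟨f v, hfC v hv, v, hv.1, hfadj v hv, rfl⟩
  · intro v hv w hw hvw
    rcases Sym2.eq_iff.mp hvw with ⟨_, h⟩ | ⟨hfv, _⟩
    · exact h
    · exact absurd (hfv ▸ hfC v hv) hw.1

theorem Unbreakable.ncard_inter_le_or {G : SimpleGraph V} {S : Set V} {q k : ℕ}
    (hS : Unbreakable G S q k) (C : Set V) (hC : (setNbhd G C).ncard ≤ k) :
    ((Cᶜ \ setNbhd G C) ∩ S).ncard ≤ q ∨ (C ∩ S).ncard ≤ q := by
  have hcover : Cᶜ ∪ (C ∪ setNbhd G C) = Set.univ :=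
    Set.eq_univ_of_forall fun v => by by_cases hv : v ∈ C <;> simp [hv]
  have hno_edge : ∀ a ∈ Cᶜ \ (C ∪ setNbhd G C), ∀ b ∈ (C ∪ setNbhd G C) \ Cᶜ, ¬ G.Adj a b := by
    rintro a ⟨ha, haN⟩ b ⟨-, hbC⟩ hab
    exact haN (Or.inr ⟨ha, b, not_not.mp hbC, hab.symm⟩)
  have horder : (Cᶜ ∩ (C ∪ setNbhd G C)).ncard ≤ k := by
    rwa [Set.inter_union_distrib_left, Set.compl_inter_self, Set.empty_union,
      Set.inter_eq_right.mpr fun v hv => hv.1]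
  have hsep := hS Cᶜ (C ∪ setNbhd G C) hcover hno_edge horder
  have hblack : Cᶜ \ (C ∪ setNbhd G C) = Cᶜ \ setNbhd G C := by
    ext v; by_cases hv : v ∈ C <;> simp [hv]
  have hwhite : (C ∪ setNbhd G C) \ Cᶜ = C := by
    ext v; by_cases hv : v ∈ C <;> simp [hv]
  rwa [hblack, hwhite] at hsep

theorem ncard_inter_le_ncard_diff_inter_add [Finite V] (A N S : Set V) :
    (A ∩ S).ncard ≤ ((A \ N) ∩ S).ncard + N.ncard :=
  calc (A ∩ S).ncard ≤ ((A \ N) ∩ S ∪ N).ncard :=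
        Set.ncard_le_ncard (fun v ⟨hA, hS⟩ => by by_cases hN : v ∈ N <;> simp [*]) (Set.toFinite _)
    _ ≤ ((A \ N) ∩ S).ncard + N.ncard := Set.ncard_union_le _ _

theorem unbreakable_colouring_general {V : Type*} [Fintype V]
    (G : SimpleGraph V) (k : ℕ) (S : Set V)
    (hS : Unbreakable G S (2 * k) k) (c : V → Bool)
    (hcut : {e : Sym2 V | ∃ u v : V, e = s(u, v) ∧ G.Adj u v ∧ c u ≠ c v}.ncard
      ≤ k) :
    min ({v | c v = true} ∩ S).ncard ({v | c v = false} ∩ S).ncard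
      ≤ 3 * k := by
  set C : Set V := {v | c v = false}
  have hblack : {v | c v = true} = Cᶜ := by ext v; simp [C]
  have hcutC : cutEdges G C ⊆ {e | ∃ u v : V, e = s(u, v) ∧ G.Adj u v ∧ c u ≠ c v} := by
    rintro e ⟨u, hu, v, hv, huv, rfl⟩
    exact ⟨u, v, rfl, huv, by simp_all [C]⟩
  have hN : (setNbhd G C).ncard ≤ k :=
    (ncard_setNbhd_le_ncard_cutEdges G C).trans
      ((Set.ncard_le_ncard hcutC (Set.toFinite _)).trans hcut)
  rw [hblack]
  rcases hS.ncard_inter_le_or C hN with h | h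
  · have := ncard_inter_le_ncard_diff_inter_add Cᶜ (setNbhd G C) S
    exact (min_le_left _ _).trans (by omega)
  · exact (min_le_right _ _).trans (by omega)

/-- any `2`-colouring with at most `k` bichromatic edges colours
all but at most `3k` vertices of a `(2k,k)`-unbreakable set with one colour. -/
theorem unbreakable_colouring {V : Type*} [Fintype V] [DecidableEq V]
    (G : SimpleGraph V) (k : ℕ) (S : Set V)
    (hS : Unbreakable G S (2 * k) k) (c : V → Bool)
    (hcut : {e : Sym2 V | ∃ u v : V, e = s(u, v) ∧ G.Adj u v ∧ c u ≠ c v}.ncard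
      ≤ k) :
    min ({v | c v = true} ∩ S).ncard ({v | c v = false} ∩ S).ncard
      ≤ 3 * k :=
  unbreakable_colouring_general G k S hS c hcut
end

section
/- Let G be a finite simple graph, q and k nonnegative integers, and X ⊆ V(G) a set that is (q,k)-unbreakable in G with |X| ≥ 3q + k + 1. Then for every set Z ⊆ V(G) with |Z| ≤ k there exists a connected component D of G − Z such that |X ∖ (V(D) ∪ Z)| ≤ q; that is, removing any at most k vertices from G leaves all of X, except for at most q vertices, in a single connected component. -/
open SimpleGraph

variable {V : Type*}

/-!
Fix `Z` with `|Z| ≤ k`. For a union `S` of components of `G − Z`, the separation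
`(S ∪ Z, V ∖ S)` has order at most `k`, so at most `q` vertices of `X` lie in `S` or at most `q`
lie outside `S ∪ Z`. If no component of `G − Z` has the second property, every component meets
`X` in at most `q` vertices. An inclusion-minimal union `U` of components with `|X ∩ U| > q`
then has `|X ∩ U| ≤ 2q` (dropping one component leaves at most `q`), so at least
`|X| - k - 2q > q` vertices of `X` lie outside `U ∪ Z`: both sides of the separation are large.
-/

def IsComponentUnion (G : SimpleGraph V) (T S : Set V) : Prop :=
  S ⊆ T ∧ ∀ u ∈ S, ∀ w ∈ T, G.Adj u w → w ∈ S

namespace IsComponentUnion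

variable {G : SimpleGraph V} {T S U : Set V}

lemma self : IsComponentUnion G T T := ⟨subset_rfl, fun _ _ _ hw _ => hw⟩

lemma diff (hU : IsComponentUnion G T U) (hS : IsComponentUnion G T S) :
    IsComponentUnion G T (U \ S) :=
  ⟨fun _ hv => hU.1 hv.1, fun u hu w hw huw =>
    ⟨hU.2 u hu.1 w hw huw, fun hwS => hu.2 (hS.2 w hwS u (hU.1 hu.1) huw.symm)⟩⟩

lemma reachable_induce (hS : IsComponentUnion G T S) {a b : T}
    (h : (G.induce T).Reachable a b) (ha : a.1 ∈ S) :
    ∃ hb : b.1 ∈ S, (G.induce S).Reachable ⟨a, ha⟩ ⟨b, hb⟩ := by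
  obtain ⟨w⟩ := h
  induction w with
  | nil => exact ⟨ha, .rfl⟩
  | @cons u v _ huv _ ih =>
    have hv : v.1 ∈ S := hS.2 u ha v v.2 huv
    obtain ⟨hb, hr⟩ := ih hv
    exact ⟨hb, (Adj.reachable (show (G.induce S).Adj ⟨u, ha⟩ ⟨v, hv⟩ from huv)).trans hr⟩

end IsComponentUnion

def componentOf (G : SimpleGraph V) (Z : Set V) (x : V) : Set V :=
  {v | ReachAvoid G Z x v}

section componentOf

variable {G : SimpleGraph V} {Z : Set V} {x : V}

lemma mem_componentOf_self (hx : x ∉ Z) : x ∈ componentOf G Z x :=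
  ⟨hx, hx, .rfl⟩

lemma isComponentUnion_componentOf : IsComponentUnion G Zᶜ (componentOf G Z x) :=
  ⟨fun _ ⟨_, hv, _⟩ => hv, fun _ ⟨hx, hu, hr⟩ w hw huw =>
    ⟨hx, hw, hr.trans (Adj.reachable (show (G.induce Zᶜ).Adj ⟨_, hu⟩ ⟨w, hw⟩ from huw))⟩⟩

lemma isCompOf_componentOf (hx : x ∉ Z) : IsCompOf G Z (componentOf G Z x) := by
  refine ⟨isComponentUnion_componentOf.1, ?_, fun D' hD D'Z hconn => ?_⟩
  · refine (connected_iff _).2 ⟨fun a b => ?_, ⟨⟨x, mem_componentOf_self hx⟩⟩⟩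
    obtain ⟨_, _, hra⟩ := a.2
    obtain ⟨_, _, hrb⟩ := b.2
    exact (isComponentUnion_componentOf.reachable_induce (hra.symm.trans hrb) a.2).2
  · refine Set.Subset.antisymm (fun v hv => ⟨hx, D'Z hv, ?_⟩) hD
    exact (hconn.preconnected ⟨x, hD (mem_componentOf_self hx)⟩ ⟨v, hv⟩).map
      (induceHomOfLE G D'Z).toHom

end componentOf

lemma Unbreakable.inter_le_or_diff_le [Finite V] {G : SimpleGraph V} {X Z S : Set V}
    {q k : ℕ} (hX : Unbreakable G X q k) (hZ : Z.ncard ≤ k)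
    (hS : IsComponentUnion G Zᶜ S) :
    (X ∩ S).ncard ≤ q ∨ (X \ (S ∪ Z)).ncard ≤ q := by
  have hA : (S ∪ Z) \ Sᶜ = S := by ext; simp
  have hB : Sᶜ \ (S ∪ Z) = (S ∪ Z)ᶜ := by ext; simp
  have hsep := hX (S ∪ Z) Sᶜ (Set.eq_univ_of_forall fun v => by by_cases v ∈ S <;> simp_all)
    (fun a ha b hb hab => by
      rw [hA] at ha; rw [hB] at hb
      exact hb (.inl (hS.2 a ha b (fun hbZ => hb (.inr hbZ)) hab)))
    ((Set.ncard_le_ncard (fun v hv => hv.1.resolve_left hv.2)).trans hZ)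
  rw [hA, hB] at hsep
  simpa only [Set.inter_comm _ X, Set.sdiff_eq] using hsep

lemma exists_componentUnion_inter_ncard_le_two_mul [Finite V] {G : SimpleGraph V}
    {X Z U : Set V} {q : ℕ} (hcomp : ∀ x ∉ Z, (X ∩ componentOf G Z x).ncard ≤ q)
    (hU : IsComponentUnion G Zᶜ U) (hXU : q < (X ∩ U).ncard) :
    ∃ U, IsComponentUnion G Zᶜ U ∧ q < (X ∩ U).ncard ∧ (X ∩ U).ncard ≤ 2 * q := by
  obtain ⟨U, ⟨hU, hXU⟩, hmin⟩ := exists_minimal_of_wellFoundedLT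
    (fun U => IsComponentUnion G Zᶜ U ∧ q < (X ∩ U).ncard) ⟨U, hU, hXU⟩
  obtain ⟨x, -, hxU⟩ := Set.nonempty_of_ncard_ne_zero (by omega : (X ∩ U).ncard ≠ 0)
  set D := componentOf G Z x
  have hxD : x ∈ D := mem_componentOf_self (hU.1 hxU)
  have hrest : (X ∩ (U \ D)).ncard ≤ q := by
    by_contra! h
    exact (hmin ⟨hU.diff isComponentUnion_componentOf, h⟩ Set.sdiff_subset hxU).2 hxD
  have hsplit := Set.ncard_inter_add_ncard_sdiff_eq_ncard (X ∩ U) D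
  have hD : (X ∩ U ∩ D).ncard ≤ q :=
    (Set.ncard_le_ncard (Set.inter_subset_inter_left _ Set.inter_subset_left)).trans
      (hcomp x (hU.1 hxU))
  rw [Set.inter_sdiff_assoc] at hsplit
  exact ⟨U, hU, hXU, by omega⟩

lemma Set.ncard_le_ncard_inter_add_add_diff [Finite V] (X U Z : Set V) :
    X.ncard ≤ (X ∩ U).ncard + Z.ncard + (X \ (U ∪ Z)).ncard := by
  calc X.ncard ≤ ((X ∩ U) ∪ Z ∪ (X \ (U ∪ Z))).ncard :=
        Set.ncard_le_ncard fun v hv => by by_cases v ∈ U <;> by_cases v ∈ Z <;> simp_all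
    _ ≤ _ := (Set.ncard_union_le _ _).trans (by gcongr; exact Set.ncard_union_le _ _)

theorem unbreakable_large_component_general {V : Type*} [Fintype V]
    (G : SimpleGraph V) (q k : ℕ) (X : Set V)
    (hX : Unbreakable G X q k) (hXcard : 3 * q + k + 1 ≤ X.ncard) :
    ∀ Z : Set V, Z.ncard ≤ k →
      ∃ D : Set V, IsCompOf G Z D ∧ (X \ (D ∪ Z)).ncard ≤ q := by
  intro Z hZ
  by_contra! hbig
  have hcomp : ∀ x ∉ Z, (X ∩ componentOf G Z x).ncard ≤ q := fun x hx =>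
    (hX.inter_le_or_diff_le hZ isComponentUnion_componentOf).resolve_right
      (hbig _ (isCompOf_componentOf hx)).not_ge
  have hout : q < (X ∩ Zᶜ).ncard := by
    have := X.ncard_le_ncard_inter_add_add_diff Zᶜ Z
    simp only [Set.compl_union_self, Set.sdiff_univ, Set.ncard_empty] at this
    omega
  obtain ⟨U, hU, hqU, hU2q⟩ := exists_componentUnion_inter_ncard_le_two_mul hcomp .self hout
  have hrest := (hX.inter_le_or_diff_le hZ hU).resolve_left hqU.not_ge
  have := X.ncard_le_ncard_inter_add_add_diff U Z
  omega

/-- removing at most `k` vertices from `G` leaves all but at most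
`q` vertices of a large `(q,k)`-unbreakable set in one connected component. -/
theorem unbreakable_large_component {V : Type*} [Fintype V] [DecidableEq V]
    (G : SimpleGraph V) (q k : ℕ) (X : Set V)
    (hX : Unbreakable G X q k) (hXcard : 3 * q + k + 1 ≤ X.ncard) :
    ∀ Z : Set V, Z.ncard ≤ k →
      ∃ D : Set V, IsCompOf G Z D ∧ (X \ (D ∪ Z)).ncard ≤ q :=
  unbreakable_large_component_general G q k X hX hXcard
end
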